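/- arXiv:2310.02950 — 2 statements merged into one kernel-verified Lean document; each statement's English description precedes it below -/
import Mathlib

section
/- Let p be an odd prime, let P ⊆ F_p^2 be a finite nonempty set of points whose first coordinates are pairwise distinct, let X ⊆ F_p^2 be finite nonempty, and for x ∈ F_p^2 let l_x = {(t, (t-x_1)^2 + x_2) : t ∈ F_p}. Then the number of incidences I(P, X) = #{(q, x) ∈ P × X : q ∈ l_x} satisfies I(P,X) ≤ |P||X|/p + p^{1/2} |P|^{1/2} |X|^{1/2}, i.e., (I(P,X) - |P||X|/p)^2 ≤ p |P| |X| whenever I(P,X) ≥ |P||X|/p. -/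
lemma aux_cardR {α : Type*} (s : Finset α) (c : α → Prop) [DecidablePred c] :
    ((s.filter c).card : ℝ) = ∑ q ∈ s, if c q then (1:ℝ) else 0 := by
  rw [Finset.card_filter]
  push_cast
  simp

lemma aux_L1 (p : ℕ) [Fact p.Prime] (q : ZMod p × ZMod p) :
    (Finset.univ.filter (fun x : ZMod p × ZMod p => q.2 = (q.1 - x.1)^2 + x.2)).card = p := by
  rw [Finset.card_filter, Fintype.sum_prod_type]
  have h : ∀ a b : ZMod p, (q.2 = (q.1 - a)^2 + b) ↔ b = q.2 - (q.1 - a)^2 := by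
    intro a b; constructor <;> intro h <;> [rw [h]; rw [h]] <;> ring
  simp_rw [h]
  simp [Finset.sum_ite_eq', ZMod.card]

lemma aux_two (p : ℕ) [Fact p.Prime] (hp : p ≠ 2) : (2 : ZMod p) ≠ 0 := by
  have : ((2:ℕ) : ZMod p) ≠ 0 := by
    rw [Ne, ZMod.natCast_eq_zero_iff]
    intro h
    exact hp ((Nat.prime_dvd_prime_iff_eq (Fact.out) Nat.prime_two).mp h)
  simpa using this

lemma aux_L2 (p : ℕ) [Fact p.Prime] (h2 : (2 : ZMod p) ≠ 0) (q q' : ZMod p × ZMod p)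
    (hne : q.1 ≠ q'.1) :
    (Finset.univ.filter (fun x : ZMod p × ZMod p =>
      q.2 = (q.1 - x.1)^2 + x.2 ∧ q'.2 = (q'.1 - x.1)^2 + x.2)).card = 1 := by
  have hd : q.1 - q'.1 ≠ 0 := sub_ne_zero.mpr hne
  set a : ZMod p := (q.1 + q'.1 - (q.2 - q'.2) * (q.1 - q'.1)⁻¹) * (2:ZMod p)⁻¹ with ha
  set b : ZMod p := q.2 - (q.1 - a)^2 with hb
  rw [Finset.card_eq_one]
  refine ⟨(a, b), ?_⟩
  rw [Finset.eq_singleton_iff_unique_mem]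
  have hmem : q.2 = (q.1 - a)^2 + b ∧ q'.2 = (q'.1 - a)^2 + b := by
    constructor
    · rw [hb]; ring
    · rw [hb, ha]; field_simp; ring
  constructor
  · simp only [Finset.mem_filter, Finset.mem_univ, true_and]
    exact hmem
  · rintro ⟨u, v⟩ hx
    simp only [Finset.mem_filter, Finset.mem_univ, true_and] at hx
    obtain ⟨e1, e2⟩ := hx
    obtain ⟨f1, f2⟩ := hmem
    have key : (2 * (q.1 - q'.1)) * (u - a) = 0 := by
      linear_combination e1 - e2 - f1 + f2
    have hu : u = a := by
      rcases mul_eq_zero.mp key with h | h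
      · exact absurd h (mul_ne_zero h2 hd)
      · exact sub_eq_zero.mp h
    have hv : v = b := by
      have : (q.1 - u)^2 + v = (q.1 - a)^2 + b := by rw [← e1, ← f1]
      rw [hu] at this
      exact add_left_cancel this
    simp [hu, hv]

theorem stmt_6 (p : ℕ) [Fact p.Prime] (hp : p ≠ 2) (P X : Finset (ZMod p × ZMod p))
    (hPne : P.Nonempty) (hXne : X.Nonempty)
    (hP : ∀ q ∈ P, ∀ q' ∈ P, q.1 = q'.1 → q = q') :
    (((P ×ˢ X).filter
        (fun qx => qx.1.2 = (qx.1.1 - qx.2.1) ^ 2 + qx.2.2)).card : ℝ) ≤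
      (P.card : ℝ) * X.card / p + Real.sqrt ((p : ℝ) * P.card * X.card) := by
  have hppos : 0 < p := (Fact.out : p.Prime).pos
  have hpr : (p : ℝ) ≠ 0 := Nat.cast_ne_zero.mpr hppos.ne'
  set Pc : ℝ := (P.card : ℝ) with hPc
  set Xc : ℝ := (X.card : ℝ) with hXc
  set f : ZMod p × ZMod p → ℝ :=
    fun x => ((P.filter (fun q => q.2 = (q.1 - x.1)^2 + x.2)).card : ℝ) with hf
  -- Step A: incidence count as a sum over X
  have hA : (((P ×ˢ X).filter
      (fun qx => qx.1.2 = (qx.1.1 - qx.2.1) ^ 2 + qx.2.2)).card : ℝ) = ∑ x ∈ X, f x := by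
    rw [aux_cardR, Finset.sum_product_right]
    exact Finset.sum_congr rfl fun x _ => (aux_cardR P _).symm
  -- Step B: total mass
  have hB : ∑ x : ZMod p × ZMod p, f x = (p : ℝ) * Pc := by
    simp_rw [hf, aux_cardR]
    rw [Finset.sum_comm]
    have : ∀ q ∈ P, (∑ x : ZMod p × ZMod p,
        if q.2 = (q.1 - x.1)^2 + x.2 then (1:ℝ) else 0) = (p : ℝ) := by
      intro q _
      rw [← aux_cardR Finset.univ (fun x : ZMod p × ZMod p => q.2 = (q.1 - x.1)^2 + x.2)]
      rw [aux_L1]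
    rw [Finset.sum_congr rfl this, Finset.sum_const, nsmul_eq_mul, hPc]
    ring
  -- Step C: second moment
  have hC : ∑ x : ZMod p × ZMod p, (f x)^2 = (p : ℝ) * Pc + Pc^2 - Pc := by
    have expand : ∀ x : ZMod p × ZMod p, (f x)^2 =
        ∑ q ∈ P, ∑ q' ∈ P, (if (q.2 = (q.1 - x.1)^2 + x.2 ∧ q'.2 = (q'.1 - x.1)^2 + x.2)
          then (1:ℝ) else 0) := by
      intro x
      rw [show f x = ((P.filter (fun q => q.2 = (q.1 - x.1)^2 + x.2)).card : ℝ) from rfl,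
        aux_cardR, sq, Finset.sum_mul_sum]
      refine Finset.sum_congr rfl fun q _ => Finset.sum_congr rfl fun q' _ => ?_
      by_cases h1 : q.2 = (q.1 - x.1)^2 + x.2 <;>
        by_cases h2 : q'.2 = (q'.1 - x.1)^2 + x.2 <;> simp [h1, h2]
    simp_rw [expand]
    rw [Finset.sum_comm]
    have inner : ∀ q ∈ P, (∑ x : ZMod p × ZMod p, ∑ q' ∈ P,
        (if (q.2 = (q.1 - x.1)^2 + x.2 ∧ q'.2 = (q'.1 - x.1)^2 + x.2)
          then (1:ℝ) else 0)) = Pc + ((p:ℝ) - 1) := by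
      intro q hq
      rw [Finset.sum_comm]
      have step : ∀ q' ∈ P, (∑ x : ZMod p × ZMod p,
          (if (q.2 = (q.1 - x.1)^2 + x.2 ∧ q'.2 = (q'.1 - x.1)^2 + x.2)
            then (1:ℝ) else 0)) = (if q = q' then ((p:ℝ) - 1) else 0) + 1 := by
        intro q' hq'
        rw [← aux_cardR Finset.univ (fun x : ZMod p × ZMod p =>
          q.2 = (q.1 - x.1)^2 + x.2 ∧ q'.2 = (q'.1 - x.1)^2 + x.2)]
        by_cases he : q = q'
        · subst he
          simp only [and_self, if_true]
          rw [aux_L1]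
          ring
        · have hne : q.1 ≠ q'.1 := fun h => he (hP q hq q' hq' h)
          rw [aux_L2 p (aux_two p hp) q q' hne]
          simp [he]
      rw [Finset.sum_congr rfl step, Finset.sum_add_distrib, Finset.sum_ite_eq]
      simp [hq, hPc]
      ring
    rw [Finset.sum_congr rfl inner, Finset.sum_const, nsmul_eq_mul, ← hPc]
    ring
  -- Step D: centered second moment over all of F_p^2
  have hcard : (((Finset.univ : Finset (ZMod p × ZMod p)).card : ℕ) : ℝ) = (p:ℝ)^2 := by
    simp [Finset.card_univ, ZMod.card]
    ring
  have hD : ∑ x : ZMod p × ZMod p, (f x - Pc / p)^2 = (p : ℝ) * Pc - Pc := by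
    have : ∀ x : ZMod p × ZMod p, (f x - Pc / p)^2 =
        (f x)^2 - 2 * (Pc / p) * f x + (Pc / p)^2 := by intro x; ring
    simp_rw [this]
    rw [Finset.sum_add_distrib, Finset.sum_sub_distrib, ← Finset.mul_sum, hB, hC,
      Finset.sum_const, nsmul_eq_mul, hcard]
    field_simp
    ring
  -- Step E: Cauchy–Schwarz
  set g : ZMod p × ZMod p → ℝ := fun x => f x - Pc / p with hg
  have hCS : (∑ x ∈ X, g x)^2 ≤ Xc * ∑ x ∈ X, (g x)^2 := by
    rw [hXc]
    exact sq_sum_le_card_mul_sum_sq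
  have hsub : ∑ x ∈ X, (g x)^2 ≤ ∑ x : ZMod p × ZMod p, (g x)^2 :=
    Finset.sum_le_sum_of_subset_of_nonneg (Finset.subset_univ X)
      (fun x _ _ => sq_nonneg _)
  have hgsum : ∑ x : ZMod p × ZMod p, (g x)^2 = (p : ℝ) * Pc - Pc := hD
  have hPc0 : 0 ≤ Pc := by rw [hPc]; positivity
  have hXc0 : 0 ≤ Xc := by rw [hXc]; positivity
  have hE : (∑ x ∈ X, g x)^2 ≤ (p : ℝ) * Pc * Xc := by
    calc (∑ x ∈ X, g x)^2 ≤ Xc * ∑ x ∈ X, (g x)^2 := hCS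
      _ ≤ Xc * ((p : ℝ) * Pc - Pc) := by
          apply mul_le_mul_of_nonneg_left _ hXc0
          rw [← hgsum]; exact hsub
      _ ≤ (p : ℝ) * Pc * Xc := by nlinarith
  -- Step F: conclude
  have hFsum : ∑ x ∈ X, g x = (∑ x ∈ X, f x) - Pc * Xc / p := by
    rw [hg]
    rw [Finset.sum_sub_distrib, Finset.sum_const, nsmul_eq_mul, hXc]
    ring
  have hle : ∑ x ∈ X, g x ≤ Real.sqrt ((p : ℝ) * Pc * Xc) := by
    calc ∑ x ∈ X, g x ≤ |∑ x ∈ X, g x| := le_abs_self _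
      _ = Real.sqrt ((∑ x ∈ X, g x)^2) := (Real.sqrt_sq_eq_abs _).symm
      _ ≤ Real.sqrt ((p : ℝ) * Pc * Xc) := Real.sqrt_le_sqrt hE
  rw [hA]
  have := hFsum ▸ hle
  linarith
end

section
/- Let p be a prime and A ⊆ F_p a finite nonempty set. Let K_3(A) be the number of tuples (a_1,...,a_6) ∈ A^6 with a_1^2 + a_2^2 + a_3^2 = a_4^2 + a_5^2 + a_6^2, let J_3(A) be the number of tuples in A^6 additionally satisfying a_1 + a_2 + a_3 = a_4 + a_5 + a_6, and let 3A - 3A = {x_1 + x_2 + x_3 - x_4 - x_5 - x_6 : x_i ∈ A}. Then K_3(A) ≤ |3A - 3A| · J_3(A). -/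
open Pointwise Finset

private def sig3 {p : ℕ} (x : ZMod p × ZMod p × ZMod p) : ZMod p := x.1 + x.2.1 + x.2.2
private def q3 {p : ℕ} (x : ZMod p × ZMod p × ZMod p) : ZMod p := x.1^2 + x.2.1^2 + x.2.2^2

private lemma card_pair {p : ℕ} [Fact p.Prime] (A : Finset (ZMod p))
    (P : (ZMod p × ZMod p × ZMod p) → (ZMod p × ZMod p × ZMod p) → Prop)
    [∀ x y : ZMod p × ZMod p × ZMod p, Decidable (P x y)] :
    Nat.card {a : Fin 6 → ZMod p // (∀ i, a i ∈ A) ∧ P (a 0, a 1, a 2) (a 3, a 4, a 5)} =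
    (((A ×ˢ A ×ˢ A) ×ˢ (A ×ˢ A ×ˢ A)).filter fun z => P z.1 z.2).card := by
  rw [← Nat.card_eq_finsetCard]
  refine Nat.card_congr ⟨fun a => ⟨((a.1 0, a.1 1, a.1 2), (a.1 3, a.1 4, a.1 5)), ?_⟩,
    fun z => ⟨![z.1.1.1, z.1.1.2.1, z.1.1.2.2, z.1.2.1, z.1.2.2.1, z.1.2.2.2], ?_⟩, ?_, ?_⟩
  · obtain ⟨h1, h2⟩ := a.2
    simp only [Finset.mem_filter, Finset.mem_product]
    exact ⟨⟨⟨h1 0, h1 1, h1 2⟩, h1 3, h1 4, h1 5⟩, h2⟩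
  · obtain ⟨h1, h2⟩ := Finset.mem_filter.1 z.2
    simp only [Finset.mem_product] at h1
    refine ⟨fun i => ?_, ?_⟩
    · fin_cases i <;> simp <;> tauto
    · simpa using h2
  · rintro ⟨a, ha⟩
    ext i
    fin_cases i <;> rfl
  · rintro ⟨⟨⟨x1, x2, x3⟩, y1, y2, y3⟩, hz⟩
    rfl

theorem stmt_17 (p : ℕ) [Fact p.Prime] (A : Finset (ZMod p)) (hA : A.Nonempty) :
    Nat.card {a : Fin 6 → ZMod p // (∀ i, a i ∈ A) ∧
        a 0 ^ 2 + a 1 ^ 2 + a 2 ^ 2 = a 3 ^ 2 + a 4 ^ 2 + a 5 ^ 2} ≤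
      (A + A + A - (A + A + A)).card *
      Nat.card {a : Fin 6 → ZMod p // (∀ i, a i ∈ A) ∧
        a 0 + a 1 + a 2 = a 3 + a 4 + a 5 ∧
        a 0 ^ 2 + a 1 ^ 2 + a 2 ^ 2 = a 3 ^ 2 + a 4 ^ 2 + a 5 ^ 2} := by
  classical
  set T3 : Finset (ZMod p × ZMod p × ZMod p) := A ×ˢ A ×ˢ A with hT3
  set K : Finset ((ZMod p × ZMod p × ZMod p) × (ZMod p × ZMod p × ZMod p)) :=
    (T3 ×ˢ T3).filter (fun z => q3 z.1 = q3 z.2) with hK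
  set J : Finset ((ZMod p × ZMod p × ZMod p) × (ZMod p × ZMod p × ZMod p)) :=
    (T3 ×ˢ T3).filter (fun z => sig3 z.1 = sig3 z.2 ∧ q3 z.1 = q3 z.2) with hJ
  have hKcard : Nat.card {a : Fin 6 → ZMod p // (∀ i, a i ∈ A) ∧
      a 0 ^ 2 + a 1 ^ 2 + a 2 ^ 2 = a 3 ^ 2 + a 4 ^ 2 + a 5 ^ 2} = K.card :=
    card_pair A (fun x y => q3 x = q3 y)
  have hJcard : Nat.card {a : Fin 6 → ZMod p // (∀ i, a i ∈ A) ∧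
      a 0 + a 1 + a 2 = a 3 + a 4 + a 5 ∧
      a 0 ^ 2 + a 1 ^ 2 + a 2 ^ 2 = a 3 ^ 2 + a 4 ^ 2 + a 5 ^ 2} = J.card :=
    card_pair A (fun x y => sig3 x = sig3 y ∧ q3 x = q3 y)
  rw [hKcard, hJcard]
  set D : Finset (ZMod p) := A + A + A - (A + A + A) with hD
  -- r s t : number of triples with given sum and square sum
  set R : ZMod p → ZMod p → Finset (ZMod p × ZMod p × ZMod p) :=
    fun s t => T3.filter (fun x => sig3 x = s ∧ q3 x = t) with hR
  have hT3mem : ∀ x ∈ T3, sig3 x ∈ A + A + A := by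
    intro x hx
    simp only [hT3, Finset.mem_product] at hx
    exact Finset.add_mem_add (Finset.add_mem_add hx.1 hx.2.1) hx.2.2
  have hmap : ∀ z ∈ K, sig3 z.1 - sig3 z.2 ∈ D := by
    intro z hz
    obtain ⟨hz1, -⟩ := Finset.mem_filter.1 hz
    rw [Finset.mem_product] at hz1
    exact Finset.sub_mem_sub (hT3mem _ hz1.1) (hT3mem _ hz1.2)
  rw [Finset.card_eq_sum_card_fiberwise hmap]
  have hfiber : ∀ n : ZMod p, (K.filter fun z => sig3 z.1 - sig3 z.2 = n).card ≤ J.card := by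
    intro n
    -- decompose the fiber over (sum, square-sum) of the first triple
    have h1 : (K.filter fun z => sig3 z.1 - sig3 z.2 = n).card =
        ∑ st : ZMod p × ZMod p, (R st.1 st.2).card * (R (st.1 - n) st.2).card := by
      rw [Finset.card_eq_sum_card_fiberwise
        (f := fun z => (sig3 z.1, q3 z.1)) (t := Finset.univ) (fun z _ => Finset.mem_univ _)]
      refine Finset.sum_congr rfl fun st _ => ?_
      rw [← Finset.card_product]
      congr 1
      ext z
      simp only [hK, hR, Finset.mem_filter, Finset.mem_product, Prod.ext_iff]
      constructor
      · rintro ⟨⟨⟨⟨hz1, hz2⟩, hq⟩, hn⟩, hs, ht⟩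
        refine ⟨⟨hz1, hs, ht⟩, hz2, ?_, ?_⟩
        · rw [← hn, ← hs]; ring
        · rw [← hq, ht]
      · rintro ⟨⟨hz1, hs, ht⟩, hz2, hs2, ht2⟩
        refine ⟨⟨⟨⟨hz1, hz2⟩, ?_⟩, ?_⟩, hs, ht⟩
        · rw [ht, ht2]
        · rw [hs, hs2]; ring
    have h2 : J.card = ∑ st : ZMod p × ZMod p, (R st.1 st.2).card * (R st.1 st.2).card := by
      rw [Finset.card_eq_sum_card_fiberwise
        (f := fun z => (sig3 z.1, q3 z.1)) (t := Finset.univ) (fun z _ => Finset.mem_univ _)]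
      refine Finset.sum_congr rfl fun st _ => ?_
      rw [← Finset.card_product]
      congr 1
      ext z
      simp only [hJ, hR, Finset.mem_filter, Finset.mem_product, Prod.ext_iff]
      constructor
      · rintro ⟨⟨⟨hz1, hz2⟩, hσ, hq⟩, hs, ht⟩
        exact ⟨⟨hz1, hs, ht⟩, hz2, by rw [← hσ, hs], by rw [← hq, ht]⟩
      · rintro ⟨⟨hz1, hs, ht⟩, hz2, hs2, ht2⟩
        exact ⟨⟨⟨hz1, hz2⟩, by rw [hs, hs2], by rw [ht, ht2]⟩, hs, ht⟩
    rw [h1, h2]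
    -- Cauchy-Schwarz
    set f : ZMod p × ZMod p → ℕ := fun st => (R st.1 st.2).card with hf
    set g : ZMod p × ZMod p → ℕ := fun st => (R (st.1 - n) st.2).card with hg
    have hshift : ∑ st : ZMod p × ZMod p, g st ^ 2 = ∑ st : ZMod p × ZMod p, f st ^ 2 := by
      exact Fintype.sum_equiv ((Equiv.subRight n).prodCongr (Equiv.refl _)) _ _ (fun st => rfl)
    have hcs := Finset.sum_mul_sq_le_sq_mul_sq Finset.univ f g
    rw [hshift] at hcs
    have : (∑ st : ZMod p × ZMod p, f st * g st) ^ 2 ≤ (∑ st : ZMod p × ZMod p, f st ^ 2) ^ 2 := by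
      simpa [sq] using hcs
    have := (Nat.pow_le_pow_iff_left (n := 2) (by norm_num)).1 this
    calc ∑ st : ZMod p × ZMod p, (R st.1 st.2).card * (R (st.1 - n) st.2).card
        = ∑ st : ZMod p × ZMod p, f st * g st := rfl
      _ ≤ ∑ st : ZMod p × ZMod p, f st ^ 2 := this
      _ = ∑ st : ZMod p × ZMod p, (R st.1 st.2).card * (R st.1 st.2).card := by
          refine Finset.sum_congr rfl fun st _ => (sq _)
  calc ∑ n ∈ D, (K.filter fun z => sig3 z.1 - sig3 z.2 = n).card
      ≤ ∑ n ∈ D, J.card := Finset.sum_le_sum fun n _ => hfiber n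
    _ = D.card * J.card := by rw [Finset.sum_const, smul_eq_mul]
end
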